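/- arXiv:2204.11374 — 3 statements merged into one kernel-verified Lean document; each statement's English description precedes it below -/
import Mathlib

section
/- Subadditivity of CVaR: for integrable real random variables Z₁, Z₂ on a common probability space and γ ∈ [0,1), CVaR_γ(Z₁ + Z₂) ≤ CVaR_γ(Z₁) + CVaR_γ(Z₂), where CVaR_γ(Z) = inf over τ ∈ ℝ of (τ + (1-γ)⁻¹ * E[max(Z - τ, 0)]). -/
/-!
For fixed thresholds `τ₁, τ₂`, the pointwise inequality
`(Z₁ + Z₂ - τ₁ - τ₂)⁺ ≤ (Z₁ - τ₁)⁺ + (Z₂ - τ₂)⁺`, integrated, bounds the objective of `Z₁ + Z₂`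
at `τ₁ + τ₂` by the sum of the objectives of `Z₁` at `τ₁` and of `Z₂` at `τ₂`; taking infima gives
subadditivity. The infima are genuine (not junk) because for `1 ≤ (1 - γ)⁻¹` every value of the
objective of `Z` is at least `𝔼[Z]`.
-/

open MeasureTheory

/-- The Rockafellar–Uryasev objective, whose infimum over `τ` is `CVaR_γ(Z)` for `c = (1 - γ)⁻¹`. -/
noncomputable def cvarObjective {Ω : Type*} [MeasurableSpace Ω] (P : Measure Ω) (c : ℝ)
    (Z : Ω → ℝ) (τ : ℝ) : ℝ :=
  τ + c * ∫ ω, max (Z ω - τ) 0 ∂P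

section

variable {Ω : Type*} [MeasurableSpace Ω] {P : Measure Ω}

lemma MeasureTheory.Integrable.max_sub_const_zero [IsFiniteMeasure P] {Z : Ω → ℝ} (hZ : Integrable Z P) (τ : ℝ) :
    Integrable (fun ω => max (Z ω - τ) 0) P :=
  (hZ.sub (integrable_const τ)).pos_part

lemma integral_max_add_sub_add_zero_le [IsFiniteMeasure P] {Z₁ Z₂ : Ω → ℝ} (hZ₁ : Integrable Z₁ P)
    (hZ₂ : Integrable Z₂ P) (τ₁ τ₂ : ℝ) :
    ∫ ω, max (Z₁ ω + Z₂ ω - (τ₁ + τ₂)) 0 ∂P ≤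
      (∫ ω, max (Z₁ ω - τ₁) 0 ∂P) + ∫ ω, max (Z₂ ω - τ₂) 0 ∂P := by
  rw [← integral_add (hZ₁.max_sub_const_zero τ₁) (hZ₂.max_sub_const_zero τ₂)]
  refine integral_mono ((hZ₁.add hZ₂).max_sub_const_zero _)
    ((hZ₁.max_sub_const_zero τ₁).add (hZ₂.max_sub_const_zero τ₂)) fun ω => ?_
  calc max (Z₁ ω + Z₂ ω - (τ₁ + τ₂)) 0 = max ((Z₁ ω - τ₁) + (Z₂ ω - τ₂)) (0 + 0) := by ring_nf
    _ ≤ max (Z₁ ω - τ₁) 0 + max (Z₂ ω - τ₂) 0 := max_add_add_le_max_add_max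

lemma cvarObjective_add_le [IsFiniteMeasure P] {c : ℝ} (hc : 0 ≤ c) {Z₁ Z₂ : Ω → ℝ} (hZ₁ : Integrable Z₁ P)
    (hZ₂ : Integrable Z₂ P) (τ₁ τ₂ : ℝ) :
    cvarObjective P c (Z₁ + Z₂) (τ₁ + τ₂) ≤ cvarObjective P c Z₁ τ₁ + cvarObjective P c Z₂ τ₂ := by
  have h := mul_le_mul_of_nonneg_left (integral_max_add_sub_add_zero_le hZ₁ hZ₂ τ₁ τ₂) hc
  simp only [cvarObjective, Pi.add_apply]
  linarith

lemma integral_le_cvarObjective [IsProbabilityMeasure P] {c : ℝ} (hc : 1 ≤ c) {Z : Ω → ℝ}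
    (hZ : Integrable Z P) (τ : ℝ) : ∫ ω, Z ω ∂P ≤ cvarObjective P c Z τ := by
  have h_nonneg : 0 ≤ ∫ ω, max (Z ω - τ) 0 ∂P := integral_nonneg fun ω => le_max_right _ _
  have h_sub : ∫ ω, Z ω ∂P - τ ≤ ∫ ω, max (Z ω - τ) 0 ∂P := by
    have h_int : ∫ ω, (Z ω - τ) ∂P = ∫ ω, Z ω ∂P - τ := by
      simp [integral_sub hZ (integrable_const τ)]
    rw [← h_int]
    exact integral_mono (hZ.sub (integrable_const τ)) (hZ.max_sub_const_zero τ)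
      fun ω => le_max_left _ _
  have h_scale := mul_le_mul_of_nonneg_right hc h_nonneg
  unfold cvarObjective
  linarith

lemma bddBelow_range_cvarObjective [IsProbabilityMeasure P] {c : ℝ} (hc : 1 ≤ c) {Z : Ω → ℝ}
    (hZ : Integrable Z P) : BddBelow (Set.range (cvarObjective P c Z)) :=
  ⟨∫ ω, Z ω ∂P, Set.forall_mem_range.2 (integral_le_cvarObjective hc hZ)⟩

end

theorem stmt_6 {Ω : Type*} [MeasurableSpace Ω] (P : Measure Ω) [IsProbabilityMeasure P]
    (Z₁ Z₂ : Ω → ℝ) (hZ₁ : Integrable Z₁ P) (hZ₂ : Integrable Z₂ P)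
    (γ : ℝ) (hγ0 : 0 ≤ γ) (hγ1 : γ < 1) :
    (⨅ τ : ℝ, (τ + (1 - γ)⁻¹ * ∫ ω, max (Z₁ ω + Z₂ ω - τ) 0 ∂P)) ≤
      (⨅ τ : ℝ, (τ + (1 - γ)⁻¹ * ∫ ω, max (Z₁ ω - τ) 0 ∂P)) +
      (⨅ τ : ℝ, (τ + (1 - γ)⁻¹ * ∫ ω, max (Z₂ ω - τ) 0 ∂P)) := by
  have hc : 1 ≤ (1 - γ)⁻¹ := one_le_inv₀ (by linarith) |>.2 (by linarith)
  refine le_ciInf_add_ciInf fun τ₁ τ₂ => ?_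
  calc (⨅ τ, cvarObjective P (1 - γ)⁻¹ (Z₁ + Z₂) τ)
      ≤ cvarObjective P (1 - γ)⁻¹ (Z₁ + Z₂) (τ₁ + τ₂) :=
        ciInf_le (bddBelow_range_cvarObjective hc (hZ₁.add hZ₂)) _
    _ ≤ cvarObjective P (1 - γ)⁻¹ Z₁ τ₁ + cvarObjective P (1 - γ)⁻¹ Z₂ τ₂ :=
        cvarObjective_add_le (zero_le_one.trans hc) hZ₁ hZ₂ τ₁ τ₂
end

section
/- Cascading dual-variable bound: let n ≥ 1, C : Fin n → ℝ with C i ≥ 0 for all i, and λ : Fin n → Fin n → ℝ with λ i' i ≥ 0 for all pairs, λ i' i = 0 whenever i' ≤ i, and suppose for each i: ∑ over i' > i of λ i' i ≤ C i + ∑ over j < i of λ i j. Then for every pair i' > i, λ i' i ≤ ∑ j, C j. -/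
/-!
Sum the feasibility constraints over all `j ≤ i`: every `L k j` with `j < k ≤ i` occurs on both
sides and cancels, so the total weight crossing the cut from `Iic i` to `Ioi i`, which contains
`L i' i`, is at most `∑ j ∈ Iic i, C j`.
-/

open Finset

theorem Finset.Ioc_union_Ioi_eq_Ioi {ι : Type*} [LinearOrder ι] [LocallyFiniteOrder ι]
    [LocallyFiniteOrderTop ι] {a b : ι} (h : a ≤ b) : Ioc a b ∪ Ioi b = Ioi a := by
  ext x
  simp only [mem_union, mem_Ioc, mem_Ioi]
  constructor
  · rintro (⟨hax, -⟩ | hbx)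
    exacts [hax, h.trans_lt hbx]
  · intro hax
    exact (le_or_gt x b).imp (⟨hax, ·⟩) id

theorem Finset.sum_Iic_sum_Ioc_eq_sum_Iic_sum_Iio {ι M : Type*} [LinearOrder ι]
    [LocallyFiniteOrder ι] [LocallyFiniteOrderBot ι] [AddCommMonoid M] (L : ι → ι → M) (a : ι) :
    ∑ j ∈ Iic a, ∑ i ∈ Ioc j a, L i j = ∑ i ∈ Iic a, ∑ j ∈ Iio i, L i j :=
  sum_comm' fun j i => by
    simp only [mem_Iic, mem_Ioc, mem_Iio]
    constructor
    · rintro ⟨-, hji, hia⟩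
      exact ⟨hji, hia⟩
    · rintro ⟨hji, hia⟩
      exact ⟨hji.le.trans hia, hji, hia⟩

theorem sum_Iic_sum_Ioi_le_sum_Iic {ι M : Type*} [LinearOrder ι] [LocallyFiniteOrder ι]
    [LocallyFiniteOrderBot ι] [LocallyFiniteOrderTop ι] [AddCommGroup M] [PartialOrder M]
    [IsOrderedAddMonoid M] {L : ι → ι → M} {C : ι → M}
    (hfeas : ∀ j, ∑ i ∈ Ioi j, L i j ≤ C j + ∑ m ∈ Iio j, L j m) (a : ι) :
    ∑ j ∈ Iic a, ∑ i ∈ Ioi a, L i j ≤ ∑ j ∈ Iic a, C j := by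
  have hsplit : ∀ j ∈ Iic a, ∑ i ∈ Ioi j, L i j = ∑ i ∈ Ioc j a, L i j + ∑ i ∈ Ioi a, L i j :=
    fun j hj => by
      rw [← Ioc_union_Ioi_eq_Ioi (mem_Iic.mp hj), sum_union]
      exact disjoint_left.mpr fun i hi hi' => (mem_Ioc.mp hi).2.not_gt (mem_Ioi.mp hi')
  have hsum := sum_le_sum fun j (_ : j ∈ Iic a) => hfeas j
  rw [sum_congr rfl hsplit, sum_add_distrib, sum_add_distrib,
    sum_Iic_sum_Ioc_eq_sum_Iic_sum_Iio, add_comm (∑ j ∈ Iic a, C j)] at hsum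
  exact le_of_add_le_add_left hsum

theorem stmt_10_general (n : ℕ) (C : Fin n → ℝ) (hC : ∀ i, 0 ≤ C i)
    (L : Fin n → Fin n → ℝ) (hL : ∀ i' i, 0 ≤ L i' i)
    (hfeas : ∀ i : Fin n,
      (∑ i' ∈ Finset.univ.filter (fun i' => i < i'), L i' i) ≤
        C i + ∑ j ∈ Finset.univ.filter (fun j => j < i), L i j) :
    ∀ i' i : Fin n, i < i' → L i' i ≤ ∑ j, C j := by
  simp only [filter_lt_eq_Ioi, filter_gt_eq_Iio] at hfeas
  intro i' i hi
  calc L i' i ≤ ∑ k ∈ Ioi i, L k i := single_le_sum (fun k _ => hL k i) (mem_Ioi.mpr hi)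
    _ ≤ ∑ j ∈ Iic i, ∑ k ∈ Ioi i, L k j :=
      single_le_sum (f := fun j => ∑ k ∈ Ioi i, L k j) (fun j _ => sum_nonneg fun k _ => hL k j)
        (mem_Iic.mpr le_rfl)
    _ ≤ ∑ j ∈ Iic i, C j := sum_Iic_sum_Ioi_le_sum_Iic hfeas i
    _ ≤ ∑ j, C j := sum_le_univ_sum_of_nonneg hC

theorem stmt_10 (n : ℕ) (hn : 1 ≤ n) (C : Fin n → ℝ) (hC : ∀ i, 0 ≤ C i)
    (L : Fin n → Fin n → ℝ) (hL : ∀ i' i, 0 ≤ L i' i)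
    (hzero : ∀ i' i : Fin n, i' ≤ i → L i' i = 0)
    (hfeas : ∀ i : Fin n,
      (∑ i' ∈ Finset.univ.filter (fun i' => i < i'), L i' i) ≤
        C i + ∑ j ∈ Finset.univ.filter (fun j => j < i), L i j) :
    ∀ i' i : Fin n, i < i' → L i' i ≤ ∑ j, C j :=
  stmt_10_general n C hC L hL hfeas
end

section
/- Separability of the worst-case expectation over a product ambiguity set (finite-support version): let S₁ ⊆ ℝ^{n₁}, S₂ ⊆ ℝ^{n₂} be nonempty finite sets, m₁, m₂ mean vectors, and Q₁ : ℝ^{n₁} → ℝ, Q₂ : ℝ^{n₂} → ℝ. For the ambiguity sets 𝒫ⱼ of probability mass functions supported on Sⱼ with mean mⱼ (assumed nonempty) and 𝒫 the set of probability mass functions on S₁ × S₂ with mean (m₁, m₂), one has sup over P ∈ 𝒫 of E_P[Q₁(D₁) + Q₂(D₂)] = (sup over P₁ ∈ 𝒫₁ of E_{P₁}[Q₁]) + (sup over P₂ ∈ 𝒫₂ of E_{P₂}[Q₂]). -/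
/-!
Every joint law on `S₁ × S₂` with mean `(m₁, m₂)` has marginals with means `m₁` and `m₂`, and the
expectation of `Q₁(D₁) + Q₂(D₂)` only depends on these marginals; conversely any pair of marginal
laws is realised by their product. Hence the set of joint expectations is the Minkowski sum of
the two sets of marginal expectations, and suprema of bounded nonempty sets of reals add.
-/

open Finset
open scoped Pointwise

def ambiguitySet {E : Type*} [AddCommMonoid E] [Module ℝ E] (S : Finset E) (m : E) :
    Set (E → ℝ) :=
  {p | (∀ d, 0 ≤ p d) ∧ (∀ d ∉ S, p d = 0) ∧ ∑ d ∈ S, p d = 1 ∧ ∑ d ∈ S, p d • d = m}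

def expectations {α : Type*} (P : Set (α → ℝ)) (S : Finset α) (Q : α → ℝ) : Set ℝ :=
  {x | ∃ p ∈ P, x = ∑ d ∈ S, p d * Q d}

section Marginals

variable {α β : Type*} (S₁ : Finset α) (S₂ : Finset β)

def fstMarginal (p : α × β → ℝ) (a : α) : ℝ := ∑ b ∈ S₂, p (a, b)

def sndMarginal (p : α × β → ℝ) (b : β) : ℝ := ∑ a ∈ S₁, p (a, b)

variable {S₁ S₂}

theorem sum_fstMarginal (p : α × β → ℝ) :
    ∑ a ∈ S₁, fstMarginal S₂ p a = ∑ d ∈ S₁ ×ˢ S₂, p d :=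
  (sum_product S₁ S₂ p).symm

theorem sum_sndMarginal (p : α × β → ℝ) :
    ∑ b ∈ S₂, sndMarginal S₁ p b = ∑ d ∈ S₁ ×ˢ S₂, p d :=
  (sum_product_right S₁ S₂ p).symm

theorem sum_fstMarginal_smul {M : Type*} [AddCommMonoid M] [Module ℝ M]
    (p : α × β → ℝ) (f : α → M) :
    ∑ a ∈ S₁, fstMarginal S₂ p a • f a = ∑ d ∈ S₁ ×ˢ S₂, p d • f d.1 := by
  simp only [fstMarginal, sum_smul, sum_product]

theorem sum_sndMarginal_smul {M : Type*} [AddCommMonoid M] [Module ℝ M]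
    (p : α × β → ℝ) (f : β → M) :
    ∑ b ∈ S₂, sndMarginal S₁ p b • f b = ∑ d ∈ S₁ ×ˢ S₂, p d • f d.2 := by
  simp only [sndMarginal, sum_smul, sum_product_right]

theorem sum_mul_add_eq_marginals (p : α × β → ℝ) (Q₁ : α → ℝ) (Q₂ : β → ℝ) :
    ∑ d ∈ S₁ ×ˢ S₂, p d * (Q₁ d.1 + Q₂ d.2) =
      ∑ a ∈ S₁, fstMarginal S₂ p a * Q₁ a + ∑ b ∈ S₂, sndMarginal S₁ p b * Q₂ b := by
  simp only [mul_add, sum_add_distrib]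
  exact congr_arg₂ (· + ·) (sum_fstMarginal_smul p Q₁).symm (sum_sndMarginal_smul p Q₂).symm

theorem fstMarginal_mul {p₁ : α → ℝ} {p₂ : β → ℝ} (h₂ : ∑ b ∈ S₂, p₂ b = 1) :
    fstMarginal S₂ (fun d => p₁ d.1 * p₂ d.2) = p₁ := by
  ext a
  simp only [fstMarginal, ← mul_sum, h₂, mul_one]

theorem sndMarginal_mul {p₁ : α → ℝ} {p₂ : β → ℝ} (h₁ : ∑ a ∈ S₁, p₁ a = 1) :
    sndMarginal S₁ (fun d => p₁ d.1 * p₂ d.2) = p₂ := by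
  ext b
  simp only [sndMarginal, ← sum_mul, h₁, one_mul]

end Marginals

section Ambiguity

variable {E : Type*} [AddCommMonoid E] [Module ℝ E]

theorem bddAbove_expectations (S : Finset E) (m : E) (Q : E → ℝ) :
    BddAbove (expectations (ambiguitySet S m) S Q) := by
  refine ⟨∑ d ∈ S, |Q d|, ?_⟩
  rintro x ⟨p, ⟨hp_nonneg, -, hp_sum, -⟩, rfl⟩
  refine sum_le_sum fun d hd => ?_
  calc p d * Q d ≤ p d * |Q d| := mul_le_mul_of_nonneg_left (le_abs_self _) (hp_nonneg d)
    _ ≤ 1 * |Q d| := by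
      gcongr
      exact hp_sum ▸ single_le_sum (fun d _ => hp_nonneg d) hd
    _ = |Q d| := one_mul _

variable {F : Type*} [AddCommMonoid F] [Module ℝ F]

theorem ambiguitySet_prod_eq (S₁ : Finset E) (S₂ : Finset F) (m₁ : E) (m₂ : F) :
    ambiguitySet (S₁ ×ˢ S₂) (m₁, m₂) =
      {p | (∀ d, 0 ≤ p d) ∧ (∀ d ∉ S₁ ×ˢ S₂, p d = 0) ∧ ∑ d ∈ S₁ ×ˢ S₂, p d = 1 ∧
        ∑ d ∈ S₁ ×ˢ S₂, p d • d.1 = m₁ ∧ ∑ d ∈ S₁ ×ˢ S₂, p d • d.2 = m₂} := by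
  ext p
  simp only [ambiguitySet, Set.mem_ofPred_eq, Prod.ext_iff, Prod.fst_sum, Prod.snd_sum,
    Prod.smul_fst, Prod.smul_snd]

variable {S₁ : Finset E} {S₂ : Finset F} {m₁ : E} {m₂ : F}

theorem mem_ambiguitySet_prod_iff {p : E × F → ℝ} :
    p ∈ ambiguitySet (S₁ ×ˢ S₂) (m₁, m₂) ↔
      (∀ d, 0 ≤ p d) ∧ (∀ d ∉ S₁ ×ˢ S₂, p d = 0) ∧
        fstMarginal S₂ p ∈ ambiguitySet S₁ m₁ ∧ sndMarginal S₁ p ∈ ambiguitySet S₂ m₂ := by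
  rw [ambiguitySet_prod_eq]
  simp only [ambiguitySet, Set.mem_ofPred_eq, sum_fstMarginal, sum_sndMarginal,
    sum_fstMarginal_smul p fun a => a, sum_sndMarginal_smul p fun b => b]
  constructor
  · rintro ⟨h_nonneg, h_zero, h_sum, h_mean₁, h_mean₂⟩
    have h_zero₁ (a) (ha : a ∉ S₁) : fstMarginal S₂ p a = 0 :=
      sum_eq_zero fun b _ => h_zero _ fun h => ha (mem_product.1 h).1
    have h_zero₂ (b) (hb : b ∉ S₂) : sndMarginal S₁ p b = 0 :=
      sum_eq_zero fun a _ => h_zero _ fun h => hb (mem_product.1 h).2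
    exact ⟨h_nonneg, h_zero, ⟨fun a => sum_nonneg fun b _ => h_nonneg _, h_zero₁, h_sum, h_mean₁⟩,
      ⟨fun b => sum_nonneg fun a _ => h_nonneg _, h_zero₂, h_sum, h_mean₂⟩⟩
  · rintro ⟨h_nonneg, h_zero, ⟨-, -, h_sum, h_mean₁⟩, ⟨-, -, -, h_mean₂⟩⟩
    exact ⟨h_nonneg, h_zero, h_sum, h_mean₁, h_mean₂⟩

theorem mul_mem_ambiguitySet_prod {p₁ : E → ℝ} {p₂ : F → ℝ}
    (hp₁ : p₁ ∈ ambiguitySet S₁ m₁) (hp₂ : p₂ ∈ ambiguitySet S₂ m₂) :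
    (fun d => p₁ d.1 * p₂ d.2) ∈ ambiguitySet (S₁ ×ˢ S₂) (m₁, m₂) := by
  have ⟨h₁_nonneg, h₁_zero, h₁_sum, _⟩ := hp₁
  have ⟨h₂_nonneg, h₂_zero, h₂_sum, _⟩ := hp₂
  refine mem_ambiguitySet_prod_iff.2 ⟨fun d => mul_nonneg (h₁_nonneg _) (h₂_nonneg _), ?_, ?_, ?_⟩
  · intro d hd
    rcases not_and_or.1 (mem_product.not.1 hd) with h | h
    · simp [h₁_zero _ h]
    · simp [h₂_zero _ h]
  · rwa [fstMarginal_mul h₂_sum]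
  · rwa [sndMarginal_mul h₁_sum]

theorem expectations_prod_add (Q₁ : E → ℝ) (Q₂ : F → ℝ) :
    expectations (ambiguitySet (S₁ ×ˢ S₂) (m₁, m₂)) (S₁ ×ˢ S₂) (fun d => Q₁ d.1 + Q₂ d.2) =
      expectations (ambiguitySet S₁ m₁) S₁ Q₁ + expectations (ambiguitySet S₂ m₂) S₂ Q₂ := by
  ext x
  simp only [expectations, Set.mem_add, Set.mem_ofPred_eq]
  constructor
  · rintro ⟨p, hp, rfl⟩
    obtain ⟨-, -, hp₁, hp₂⟩ := mem_ambiguitySet_prod_iff.1 hp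
    exact ⟨_, ⟨_, hp₁, rfl⟩, _, ⟨_, hp₂, rfl⟩, (sum_mul_add_eq_marginals p Q₁ Q₂).symm⟩
  · rintro ⟨_, ⟨p₁, hp₁, rfl⟩, _, ⟨p₂, hp₂, rfl⟩, rfl⟩
    refine ⟨_, mul_mem_ambiguitySet_prod hp₁ hp₂, ?_⟩
    rw [sum_mul_add_eq_marginals, fstMarginal_mul hp₂.2.2.1, sndMarginal_mul hp₁.2.2.1]

end Ambiguity

theorem stmt_13_general (n₁ n₂ : ℕ)
    (S₁ : Finset (Fin n₁ → ℝ)) (S₂ : Finset (Fin n₂ → ℝ))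
    (m₁ : Fin n₁ → ℝ) (m₂ : Fin n₂ → ℝ)
    (Q₁ : (Fin n₁ → ℝ) → ℝ) (Q₂ : (Fin n₂ → ℝ) → ℝ)
    (P₁ : Set ((Fin n₁ → ℝ) → ℝ)) (P₂ : Set ((Fin n₂ → ℝ) → ℝ))
    (Pjoint : Set (((Fin n₁ → ℝ) × (Fin n₂ → ℝ)) → ℝ))
    (hP₁ : P₁ = {p | (∀ d, 0 ≤ p d) ∧ (∀ d ∉ S₁, p d = 0) ∧
        (∑ d ∈ S₁, p d) = 1 ∧ (∑ d ∈ S₁, p d • d) = m₁})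
    (hP₂ : P₂ = {p | (∀ d, 0 ≤ p d) ∧ (∀ d ∉ S₂, p d = 0) ∧
        (∑ d ∈ S₂, p d) = 1 ∧ (∑ d ∈ S₂, p d • d) = m₂})
    (hPjoint : Pjoint = {p | (∀ d, 0 ≤ p d) ∧ (∀ d ∉ S₁ ×ˢ S₂, p d = 0) ∧
        (∑ d ∈ S₁ ×ˢ S₂, p d) = 1 ∧
        (∑ d ∈ S₁ ×ˢ S₂, p d • d.1) = m₁ ∧
        (∑ d ∈ S₁ ×ˢ S₂, p d • d.2) = m₂})
    (hne₁ : P₁.Nonempty) (hne₂ : P₂.Nonempty) :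
    sSup {x : ℝ | ∃ p ∈ Pjoint, x = ∑ d ∈ S₁ ×ˢ S₂, p d * (Q₁ d.1 + Q₂ d.2)} =
      sSup {x : ℝ | ∃ p ∈ P₁, x = ∑ d ∈ S₁, p d * Q₁ d} +
      sSup {x : ℝ | ∃ p ∈ P₂, x = ∑ d ∈ S₂, p d * Q₂ d} := by
  rw [← ambiguitySet_prod_eq] at hPjoint
  subst hP₁ hP₂ hPjoint
  obtain ⟨p₁, hp₁⟩ := hne₁
  obtain ⟨p₂, hp₂⟩ := hne₂
  exact (congr_arg sSup (expectations_prod_add Q₁ Q₂)).trans <| csSup_add ⟨_, p₁, hp₁, rfl⟩ (bddAbove_expectations S₁ m₁ Q₁)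
    ⟨_, p₂, hp₂, rfl⟩ (bddAbove_expectations S₂ m₂ Q₂)

theorem stmt_13 (n₁ n₂ : ℕ)
    (S₁ : Finset (Fin n₁ → ℝ)) (S₂ : Finset (Fin n₂ → ℝ))
    (hS₁ : S₁.Nonempty) (hS₂ : S₂.Nonempty)
    (m₁ : Fin n₁ → ℝ) (m₂ : Fin n₂ → ℝ)
    (Q₁ : (Fin n₁ → ℝ) → ℝ) (Q₂ : (Fin n₂ → ℝ) → ℝ)
    (P₁ : Set ((Fin n₁ → ℝ) → ℝ)) (P₂ : Set ((Fin n₂ → ℝ) → ℝ))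
    (Pjoint : Set (((Fin n₁ → ℝ) × (Fin n₂ → ℝ)) → ℝ))
    (hP₁ : P₁ = {p | (∀ d, 0 ≤ p d) ∧ (∀ d ∉ S₁, p d = 0) ∧
        (∑ d ∈ S₁, p d) = 1 ∧ (∑ d ∈ S₁, p d • d) = m₁})
    (hP₂ : P₂ = {p | (∀ d, 0 ≤ p d) ∧ (∀ d ∉ S₂, p d = 0) ∧
        (∑ d ∈ S₂, p d) = 1 ∧ (∑ d ∈ S₂, p d • d) = m₂})
    (hPjoint : Pjoint = {p | (∀ d, 0 ≤ p d) ∧ (∀ d ∉ S₁ ×ˢ S₂, p d = 0) ∧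
        (∑ d ∈ S₁ ×ˢ S₂, p d) = 1 ∧
        (∑ d ∈ S₁ ×ˢ S₂, p d • d.1) = m₁ ∧
        (∑ d ∈ S₁ ×ˢ S₂, p d • d.2) = m₂})
    (hne₁ : P₁.Nonempty) (hne₂ : P₂.Nonempty) :
    sSup {x : ℝ | ∃ p ∈ Pjoint, x = ∑ d ∈ S₁ ×ˢ S₂, p d * (Q₁ d.1 + Q₂ d.2)} =
      sSup {x : ℝ | ∃ p ∈ P₁, x = ∑ d ∈ S₁, p d * Q₁ d} +
      sSup {x : ℝ | ∃ p ∈ P₂, x = ∑ d ∈ S₂, p d * Q₂ d} :=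
  stmt_13_general n₁ n₂ S₁ S₂ m₁ m₂ Q₁ Q₂ P₁ P₂ Pjoint hP₁ hP₂ hPjoint hne₁ hne₂
end
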